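/- The circulant graphs C_48(1, 2, 23) and C_48(2, 11, 13) are isomorphic as simple graphs, but there is no unit x modulo 48 whose reflexive modular reduction of x·{1,2,23} equals {2,11,13}; hence they are isomorphic circulant graphs that are not Adam (Type-1) isomorphic. -/

import Mathlib

/-- Reflexive modular reduction of `r` modulo `n`: `min (r mod n, n - r mod n)`. -/
def reflRed (n : ℕ) (r : ℤ) : ℤ := min (r % (n : ℤ)) ((n : ℤ) - r % (n : ℤ))

/-- Reflexive reduction of the set `x • R` modulo `n`. -/
def reflRedSet (n : ℕ) (x : ℤ) (R : Finset ℤ) : Finset ℤ :=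
  R.image (fun r => reflRed n (x * r))

/-- The circulant graph `C_n(S)` on `ZMod n`. -/
def circulant (n : ℕ) (S : Finset ℤ) : SimpleGraph (ZMod n) where
  Adj a b := a ≠ b ∧ ∃ s ∈ S, a - b = (s : ZMod n) ∨ a - b = -(s : ZMod n)
  symm := by
    refine ⟨?_⟩
    rintro a b ⟨hab, s, hs, h⟩
    refine ⟨hab.symm, s, hs, ?_⟩
    have hba : b - a = -(a - b) := (neg_sub a b).symm
    rcases h with h | h
    · right; rw [hba, h]
    · left; rw [hba, h, neg_neg]
  loopless := by refine ⟨?_⟩; rintro a ⟨h, -⟩; exact h rfl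

/-!
Let `f` fix the even residues mod 48 and add 12 to the odd ones. Then `f a - f b` is `a - b`
when `a - b` is even and `a - b ± 12` when it is odd; the even connection `±2` is untouched
while a shift by `±12` trades the odd connections `±1, ±23` for `±11, ±13`, so `f` is an
isomorphism `C₄₈(1, 2, 23) ≃g C₄₈(2, 11, 13)`.

The reflexive reduction of `x * b` only depends on `x` up to sign mod 48, hence on the
reflexive reduction `r` of `x`. If `x` sent `1` into `{2, 11, 13}`, it would send `2` to the
reflexive reduction of `2 r`, which is `4` or `22`.
-/

theorem reflRed_congr {n : ℕ} {a b : ℤ} (h : a ≡ b [ZMOD n]) : reflRed n a = reflRed n b := by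
  rw [reflRed, reflRed, h]

theorem reflRed_neg (n : ℕ) (r : ℤ) : reflRed n (-r) = reflRed n r := by
  unfold reflRed
  rw [Int.neg_emod, Int.natAbs_natCast]
  split_ifs with h
  · simp [Int.emod_eq_zero_of_dvd h]
  · rw [sub_sub_cancel, min_comm]

theorem reflRed_modEq_or_modEq_neg (n : ℕ) (r : ℤ) :
    reflRed n r ≡ r [ZMOD n] ∨ reflRed n r ≡ -r [ZMOD n] := by
  rcases min_choice (r % (n : ℤ)) ((n : ℤ) - r % (n : ℤ)) with h | h <;> rw [reflRed, h]
  · exact Or.inl (Int.mod_modEq r n)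
  · refine Or.inr ?_
    calc (n : ℤ) - r % n ≡ 0 - r [ZMOD n] :=
          (Int.modEq_zero_iff_dvd.2 dvd_rfl).sub (Int.mod_modEq r n)
      _ = -r := zero_sub r

theorem reflRed_reflRed_mul (n : ℕ) (a b : ℤ) : reflRed n (reflRed n a * b) = reflRed n (a * b) := by
  rcases reflRed_modEq_or_modEq_neg n a with h | h
  · exact reflRed_congr (h.mul_right b)
  · rw [reflRed_congr (h.mul_right b), neg_mul, reflRed_neg]

instance (n : ℕ) (S : Finset ℤ) : DecidableRel (circulant n S).Adj :=
  fun a b => inferInstanceAs (Decidable (a ≠ b ∧ ∃ s ∈ S, a - b = (s : ZMod n) ∨ a - b = -(s : ZMod n)))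

theorem circulant_adj_iff_adj_sub_zero {n : ℕ} {S : Finset ℤ} {a b : ZMod n} :
    (circulant n S).Adj a b ↔ (circulant n S).Adj (a - b) 0 := by
  simp only [circulant, ne_eq, sub_zero, sub_eq_zero]

section AddOnOdd

variable {n : ℕ} (hn : 2 ∣ n)

local notation "π" => ZMod.castHom hn (ZMod 2)

def addOnOdd (t x : ZMod n) : ZMod n := if π x = 0 then x else x + t

variable {hn}

theorem castHom_addOnOdd {t : ZMod n} (ht : π t = 0) (x : ZMod n) :
    π (addOnOdd hn t x) = π x := by
  unfold addOnOdd
  split_ifs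
  · rfl
  · rw [map_add, ht, add_zero]

def addOnOddEquiv {t : ZMod n} (ht : π t = 0) : ZMod n ≃ ZMod n where
  toFun := addOnOdd hn t
  invFun := addOnOdd hn (-t)
  left_inv x := by
    have := castHom_addOnOdd ht x
    unfold addOnOdd at *; split_ifs at * <;> simp_all
  right_inv x := by
    have := castHom_addOnOdd (hn := hn) (t := -t) (by rw [map_neg, ht, neg_zero]) x
    unfold addOnOdd at *; split_ifs at * <;> simp_all

theorem addOnOdd_sub_addOnOdd (t a b : ZMod n) :
    (addOnOdd hn t a - addOnOdd hn t b = a - b ∧ π (a - b) = 0) ∨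
      ((addOnOdd hn t a - addOnOdd hn t b = a - b + t ∨
        addOnOdd hn t a - addOnOdd hn t b = a - b - t) ∧ π (a - b) = 1) := by
  have zero_or_one : ∀ y : ZMod 2, y = 0 ∨ y = 1 := by decide
  unfold addOnOdd
  rw [map_sub]
  rcases zero_or_one (π a) with ha | ha <;> rcases zero_or_one (π b) with hb | hb <;>
    simp only [ha, hb, ↓reduceIte, one_ne_zero, sub_self, sub_zero, zero_sub,
      ZMod.neg_eq_self_mod_two]
  · exact Or.inl ⟨trivial, trivial⟩
  · exact Or.inr ⟨Or.inr (by ring), trivial⟩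
  · exact Or.inr ⟨Or.inl (by ring), trivial⟩
  · exact Or.inl ⟨by ring, trivial⟩

end AddOnOdd

theorem circulant_48_adj_shift_iff (d : ZMod 48) :
    (ZMod.castHom (by norm_num : 2 ∣ 48) (ZMod 2) d = 0 →
      ((circulant 48 {2, 11, 13}).Adj d 0 ↔ (circulant 48 {1, 2, 23}).Adj d 0)) ∧
    (ZMod.castHom (by norm_num : 2 ∣ 48) (ZMod 2) d = 1 →
      ((circulant 48 {2, 11, 13}).Adj (d + 12) 0 ↔ (circulant 48 {1, 2, 23}).Adj d 0) ∧
      ((circulant 48 {2, 11, 13}).Adj (d - 12) 0 ↔ (circulant 48 {1, 2, 23}).Adj d 0)) := by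
  revert d; decide

theorem stmt4 :
    Nonempty (circulant 48 ({1, 2, 23} : Finset ℤ) ≃g circulant 48 ({2, 11, 13} : Finset ℤ)) ∧
    ¬ ∃ x : ℤ, Int.gcd x 48 = 1 ∧ reflRedSet 48 x ({1, 2, 23} : Finset ℤ) = {2, 11, 13} := by
  constructor
  · refine ⟨⟨addOnOddEquiv (hn := by norm_num) (t := 12) (by decide), fun {a b} => ?_⟩⟩
    rw [circulant_adj_iff_adj_sub_zero, circulant_adj_iff_adj_sub_zero (a := a)]
    rcases addOnOdd_sub_addOnOdd 12 a b with ⟨h, hab⟩ | ⟨h | h, hab⟩ <;>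
      simp only [addOnOddEquiv, Equiv.coe_fn_mk, h]
    · exact (circulant_48_adj_shift_iff _).1 hab
    · exact ((circulant_48_adj_shift_iff _).2 hab).1
    · exact ((circulant_48_adj_shift_iff _).2 hab).2
  · rintro ⟨x, -, hx⟩
    have hmem : ∀ r ∈ ({1, 2, 23} : Finset ℤ), reflRed 48 (x * r) ∈ ({2, 11, 13} : Finset ℤ) :=
      fun r hr => hx ▸ Finset.mem_image_of_mem _ hr
    have h1 := hmem 1 (by simp)
    have h2 := hmem 2 (by simp)
    rw [mul_one] at h1
    rw [← reflRed_reflRed_mul] at h2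
    simp only [Finset.mem_insert, Finset.mem_singleton] at h1
    rcases h1 with h | h | h <;> rw [h] at h2 <;> revert h2 <;> decide
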